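/- For all integers n ≥ 3 and 1 ≤ m ≤ ⌊(n−1)/2⌋, under the explicit labeling g of the generalised Petersen graph P(n,m) (defined in the context), the vertex-weights of the outer-cycle vertices are pairwise distinct: wt_g(u_i)=g(u_i)+g(u_{i−1}u_i)+g(u_iu_{i+1})+g(u_iv_i) (indices mod n) takes pairwise different values for i=1,...,n. -/
import Mathlib


open Sum

/-- The weight of an edge `e` under a total labeling `f` of the graph `G`:
the label of `e` plus the labels of its two endpoints. -/
noncomputable def edgeWt {V : Type*} (G : SimpleGraph V) (f : V ⊕ G.edgeSet → ℕ)
    (e : G.edgeSet) : ℕ :=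
  f (inr e) + ∑ᶠ (v : V) (_ : v ∈ (e : Sym2 V)), f (inl v)

/-- The weight of a vertex `v` under a total labeling `f` of the graph `G`:
the label of `v` plus the labels of all edges incident with `v`. -/
noncomputable def vertexWt {V : Type*} (G : SimpleGraph V) (f : V ⊕ G.edgeSet → ℕ)
    (v : V) : ℕ :=
  f (inl v) + ∑ᶠ (e : G.edgeSet) (_ : v ∈ (e : Sym2 V)), f (inr e)

/-- The generalised Petersen graph `P(n,m)`, with outer vertices `u_i = inl i` and
inner vertices `v_i = inr i` (`i` running over `Fin n`), outer cycle edges `u_i u_{i+1}`,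
spokes `u_i v_i`, and inner edges `v_i v_{i+m}` (indices mod `n`). -/
def petersen (n m : ℕ) : SimpleGraph (Fin n ⊕ Fin n) :=
  SimpleGraph.fromRel (fun a b =>
    (∃ p q : Fin n, ((p : ℕ) + 1) % n = (q : ℕ) ∧ a = inl p ∧ b = inl q) ∨
    (∃ p q : Fin n, ((p : ℕ) + m) % n = (q : ℕ) ∧ a = inr p ∧ b = inr q) ∨
    (∃ p : Fin n, a = inl p ∧ b = inr p))

/-- Helper for labeling the edges of a cycle-like structure symmetrically: on an edge
joining `p` to `q = (p + s) mod n` it takes the value `base - p` (0-based indices). -/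
def cycEL (n s base : ℕ) (p q : Fin n) : ℕ :=
  if (q : ℕ) = ((p : ℕ) + s) % n ∧ (p : ℕ) = ((q : ℕ) + s) % n then
    base - min (p : ℕ) (q : ℕ)
  else if (q : ℕ) = ((p : ℕ) + s) % n then base - (p : ℕ)
  else if (p : ℕ) = ((q : ℕ) + s) % n then base - (q : ℕ)
  else 0

lemma cycEL_comm (n s base : ℕ) (p q : Fin n) : cycEL n s base p q = cycEL n s base q p := by
  unfold cycEL
  by_cases h1 : (q : ℕ) = ((p : ℕ) + s) % n <;> by_cases h2 : (p : ℕ) = ((q : ℕ) + s) % n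
  · rw [if_pos ⟨h1, h2⟩, if_pos ⟨h2, h1⟩, Nat.min_comm]
  · rw [if_neg (fun h => h2 h.2), if_pos h1, if_neg (fun h => h2 h.1), if_neg h2, if_pos h1]
  · rw [if_neg (fun h => h1 h.1), if_neg h1, if_pos h2, if_neg (fun h => h1 h.2), if_pos h2]
  · rw [if_neg (fun h => h1 h.1), if_neg h1, if_neg h2, if_neg (fun h => h2 h.1), if_neg h2,
      if_neg h1]

/-- Labels of the vertices of `P(n,m)`: `g(u_i) = i` and `g(v_i) = n + i`
(1-based index `i = k + 1`). -/
def petVL (n : ℕ) : Fin n ⊕ Fin n → ℕ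
  | inl k => (k : ℕ) + 1
  | inr k => n + (k : ℕ) + 1

/-- Labels of the edges of `P(n,m)`, written as a symmetric function of the two
endpoints: `g(u_i u_{i+1}) = 3n - i + 1`, `g(u_1 v_1) = 3n + 1`,
`g(u_i v_i) = 4n - i + 2` for `2 ≤ i ≤ n`, and `g(v_i v_{i+m}) = 5n - i + 1`
(all indices 1-based, `i = k + 1`). -/
def petEL (n m : ℕ) : Fin n ⊕ Fin n → Fin n ⊕ Fin n → ℕ
  | inl p, inl q => cycEL n 1 (3 * n) p q
  | inr p, inr q => cycEL n m (5 * n) p q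
  | inl p, inr _ => if (p : ℕ) = 0 then 3 * n + 1 else 4 * n - (p : ℕ) + 1
  | inr _, inl q => if (q : ℕ) = 0 then 3 * n + 1 else 4 * n - (q : ℕ) + 1

lemma petEL_comm (n m : ℕ) (a b : Fin n ⊕ Fin n) : petEL n m a b = petEL n m b a := by
  rcases a with p | p <;> rcases b with q | q <;> simp [petEL, cycEL_comm]

/-- The explicit super total labeling `g` of the generalised Petersen graph `P(n,m)`
from the paper. -/
def petLabel (n m : ℕ) : (Fin n ⊕ Fin n) ⊕ (petersen n m).edgeSet → ℕ :=
  Sum.elim (petVL n)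
    (fun e => Sym2.lift ⟨petEL n m, petEL_comm n m⟩ (e : Sym2 (Fin n ⊕ Fin n)))

lemma mod_two_cases {x n : ℕ} (hn : 0 < n) (h : x < 2*n) :
    (x % n = x ∧ x < n) ∨ (x % n = x - n ∧ n ≤ x) := by
  rcases lt_or_ge x n with h1 | h1
  · exact Or.inl ⟨Nat.mod_eq_of_lt h1, h1⟩
  · exact Or.inr ⟨by rw [Nat.mod_eq_sub_mod h1, Nat.mod_eq_of_lt (by omega)], h1⟩

lemma pred_mod {n p k : ℕ} (hn : 0 < n) (hp : p < n) (hk : k < n)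
    (h : (p+1) % n = k) : p = (k + (n-1)) % n := by
  rcases mod_two_cases hn (show p+1 < 2*n by omega) with ⟨h1,h2⟩|⟨h1,h2⟩ <;>
  rcases mod_two_cases hn (show k+(n-1) < 2*n by omega) with ⟨h3,h4⟩|⟨h3,h4⟩ <;> omega

lemma succ_pred_mod {n k : ℕ} (hn : 0 < n) (hk : k < n) : ((k + (n-1)) % n + 1) % n = k := by
  have hlt : (k+(n-1)) % n < n := Nat.mod_lt _ hn
  rcases mod_two_cases hn (show (k+(n-1))%n + 1 < 2*n by omega) with ⟨h3,h4⟩|⟨h3,h4⟩ <;>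
  rcases mod_two_cases hn (show k+(n-1) < 2*n by omega) with ⟨h1,h2⟩|⟨h1,h2⟩ <;> omega

lemma petersen_adj_inl {n m : ℕ} (hn : 3 ≤ n) (k : Fin n) (w : Fin n ⊕ Fin n) :
    (petersen n m).Adj (inl k) w ↔
      w = inl ⟨((k:ℕ)+1)%n, Nat.mod_lt _ (by omega)⟩ ∨
      w = inl ⟨((k:ℕ)+(n-1))%n, Nat.mod_lt _ (by omega)⟩ ∨ w = inr k := by
  have hn0 : 0 < n := by omega
  rw [petersen, SimpleGraph.fromRel_adj]
  constructor
  · rintro ⟨hne, h | h⟩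
    · rcases h with ⟨p,q,hpq,ha,hb⟩ | ⟨p,q,hpq,ha,hb⟩ | ⟨p,ha,hb⟩
      · have hp : p = k := by injection ha.symm
        subst hb
        exact Or.inl (congrArg inl (Fin.ext (by rw [← hpq, hp])))
      · exact absurd ha (by simp)
      · have hp : p = k := by injection ha.symm
        subst hb
        exact Or.inr (Or.inr (by rw [hp]))
    · rcases h with ⟨p,q,hpq,ha,hb⟩ | ⟨p,q,hpq,ha,hb⟩ | ⟨p,ha,hb⟩
      · have hq : (q:ℕ) = (k:ℕ) := congrArg Fin.val (by injection hb.symm)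
        subst ha
        refine Or.inr (Or.inl ?_)
        have := pred_mod hn0 p.2 k.2 (by rw [hpq, hq])
        exact congrArg inl (Fin.ext (by simpa using this))
      · exact absurd hb (by simp)
      · exact absurd hb (by simp)
  · rintro (rfl | rfl | rfl)
    · refine ⟨?_, Or.inl (Or.inl ⟨k, _, rfl, rfl, rfl⟩)⟩
      intro h
      have h' : (k:ℕ) = ((k:ℕ)+1)%n := by
        have := inl.inj h; exact congrArg Fin.val this
      rcases mod_two_cases hn0 (show (k:ℕ)+1 < 2*n by omega) with ⟨h1,h2⟩|⟨h1,h2⟩ <;>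
        [omega; (have := k.2; omega)]
    · refine ⟨?_, Or.inr (Or.inl ⟨_, k, succ_pred_mod hn0 k.2, rfl, rfl⟩)⟩
      intro h
      have h' : (k:ℕ) = ((k:ℕ)+(n-1))%n := by
        have := inl.inj h; exact congrArg Fin.val this
      rcases mod_two_cases hn0 (show (k:ℕ)+(n-1) < 2*n by have := k.2; omega) with ⟨h1,h2⟩|⟨h1,h2⟩ <;>
        (have := k.2; omega)
    · exact ⟨by simp, Or.inl (Or.inr (Or.inr ⟨k, rfl, rfl⟩))⟩

lemma cycEL_eval {n s : ℕ} (base : ℕ) (p q : Fin n) (h1 : (q:ℕ) = ((p:ℕ)+s)%n)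
    (h2 : (p:ℕ) ≠ ((q:ℕ)+s)%n) : cycEL n s base p q = base - (p:ℕ) := by
  unfold cycEL; rw [if_neg (fun h => h2 h.2), if_pos h1]

lemma cycEL_eval' {n s : ℕ} (base : ℕ) (p q : Fin n) (h1 : (q:ℕ) ≠ ((p:ℕ)+s)%n)
    (h2 : (p:ℕ) = ((q:ℕ)+s)%n) : cycEL n s base p q = base - (q:ℕ) := by
  unfold cycEL; rw [if_neg (fun h => h1 h.1), if_neg h1, if_pos h2]

lemma wt_outer {n m : ℕ} (hn : 3 ≤ n) (k : Fin n) :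
    vertexWt (petersen n m) (petLabel n m) (inl k) =
      if (k:ℕ) = 0 then 8*n+3 else 10*n + 3 - 2*(k:ℕ) := by
  classical
  have hn0 : 0 < n := by omega
  have hkn := k.2
  set k1 : Fin n := ⟨((k:ℕ)+1)%n, Nat.mod_lt _ hn0⟩ with hk1
  set k0 : Fin n := ⟨((k:ℕ)+(n-1))%n, Nat.mod_lt _ hn0⟩ with hk0
  have hE1 : s(inl k, inl k1) ∈ (petersen n m).edgeSet :=
    (SimpleGraph.mem_edgeSet _).mpr ((petersen_adj_inl hn k _).mpr (Or.inl rfl))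
  have hE2 : s(inl k, inl k0) ∈ (petersen n m).edgeSet :=
    (SimpleGraph.mem_edgeSet _).mpr ((petersen_adj_inl hn k _).mpr (Or.inr (Or.inl rfl)))
  have hE3 : s(inl k, inr k) ∈ (petersen n m).edgeSet :=
    (SimpleGraph.mem_edgeSet _).mpr ((petersen_adj_inl hn k _).mpr (Or.inr (Or.inr rfl)))
  set E1 : (petersen n m).edgeSet := ⟨_, hE1⟩ with hE1'
  set E2 : (petersen n m).edgeSet := ⟨_, hE2⟩ with hE2'
  set E3 : (petersen n m).edgeSet := ⟨_, hE3⟩ with hE3'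
  have hkk1 : (k:ℕ) ≠ ((k:ℕ)+1)%n := by
    rcases mod_two_cases hn0 (show (k:ℕ)+1 < 2*n by omega) with ⟨h1,h2⟩|⟨h1,h2⟩ <;> omega
  have hkk0 : (k:ℕ) ≠ ((k:ℕ)+(n-1))%n := by
    rcases mod_two_cases hn0 (show (k:ℕ)+(n-1) < 2*n by omega) with ⟨h1,h2⟩|⟨h1,h2⟩ <;> omega
  have hk10 : ((k:ℕ)+1)%n ≠ ((k:ℕ)+(n-1))%n := by
    rcases mod_two_cases hn0 (show (k:ℕ)+1 < 2*n by omega) with ⟨h1,h2⟩|⟨h1,h2⟩ <;>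
    rcases mod_two_cases hn0 (show (k:ℕ)+(n-1) < 2*n by omega) with ⟨h3,h4⟩|⟨h3,h4⟩ <;> omega
  have hmem : ∀ e : (petersen n m).edgeSet,
      (inl k ∈ (e : Sym2 (Fin n ⊕ Fin n))) ↔ (e = E1 ∨ e = E2 ∨ e = E3) := by
    rintro ⟨s, hs⟩
    revert hs
    refine Sym2.ind (fun a b hs => ?_) s
    rw [Sym2.mem_iff]
    simp only [hE1', hE2', hE3', Subtype.mk.injEq]
    constructor
    · rintro (rfl | rfl)
      · rcases (petersen_adj_inl hn k b).mp ((SimpleGraph.mem_edgeSet _).mp hs) with rfl | rfl | rfl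
        · exact Or.inl rfl
        · exact Or.inr (Or.inl rfl)
        · exact Or.inr (Or.inr rfl)
      · rcases (petersen_adj_inl hn k a).mp
          ((SimpleGraph.mem_edgeSet _).mp hs).symm with rfl | rfl | rfl
        · exact Or.inl Sym2.eq_swap
        · exact Or.inr (Or.inl Sym2.eq_swap)
        · exact Or.inr (Or.inr Sym2.eq_swap)
    · rintro (h | h | h) <;> exact Sym2.mem_iff.mp (by rw [h]; simp)
  have hsum : ∑ᶠ (e : (petersen n m).edgeSet) (_ : inl k ∈ (e : Sym2 (Fin n ⊕ Fin n))),
        petLabel n m (inr e)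
      = ∑ e ∈ ({E1, E2, E3} : Finset (petersen n m).edgeSet), petLabel n m (inr e) := by
    rw [← finsum_mem_coe_finset]
    refine finsum_congr fun e => finsum_congr_Prop ?_ fun _ => rfl
    refine propext ((hmem e).trans ?_)
    simp
  have hne12 : E1 ≠ E2 := by
    simp only [hE1', hE2', Ne, Subtype.mk.injEq, Sym2.eq_iff]
    rintro (⟨-, h⟩ | ⟨h, -⟩)
    · exact hk10 (congrArg Fin.val (inl.inj h))
    · exact hkk0 (congrArg Fin.val (inl.inj h))
  have hne13 : E1 ≠ E3 := by
    simp [hE1', hE3', Sym2.eq_iff]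
  have hne23 : E2 ≠ E3 := by
    simp [hE2', hE3', Sym2.eq_iff]
  rw [vertexWt, hsum, Finset.sum_insert (by simp [hne12, hne13]),
    Finset.sum_insert (by simp [hne23]), Finset.sum_singleton]
  have hL1 : petLabel n m (inr E1) = 3*n - (k:ℕ) := by
    rw [hE1']
    show Sym2.lift ⟨petEL n m, petEL_comm n m⟩ s(inl k, inl k1) = _
    rw [Sym2.lift_mk]
    show cycEL n 1 (3*n) k k1 = _
    refine cycEL_eval _ _ _ rfl ?_
    show (k:ℕ) ≠ (((k:ℕ)+1)%n + 1)%n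
    have h1 : ((k:ℕ)+1)%n < n := Nat.mod_lt _ hn0
    rcases mod_two_cases hn0 (show (k:ℕ)+1 < 2*n by omega) with ⟨h2,h3⟩|⟨h2,h3⟩ <;>
    rcases mod_two_cases hn0 (show ((k:ℕ)+1)%n+1 < 2*n by omega) with ⟨h4,h5⟩|⟨h4,h5⟩ <;> omega
  have hL2 : petLabel n m (inr E2) = 3*n - ((k:ℕ)+(n-1))%n := by
    rw [hE2']
    show Sym2.lift ⟨petEL n m, petEL_comm n m⟩ s(inl k, inl k0) = _
    rw [Sym2.lift_mk]
    show cycEL n 1 (3*n) k k0 = _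
    exact cycEL_eval' _ _ _ (fun h => hk10 h.symm) (succ_pred_mod hn0 hkn).symm
  have hL3 : petLabel n m (inr E3) = if (k:ℕ) = 0 then 3*n+1 else 4*n - (k:ℕ) + 1 := by
    rw [hE3']
    show Sym2.lift ⟨petEL n m, petEL_comm n m⟩ s(inl k, inr k) = _
    rw [Sym2.lift_mk]
    rfl
  rw [hL1, hL2, hL3]
  show (k:ℕ) + 1 + _ = _
  rcases mod_two_cases hn0 (show (k:ℕ)+(n-1) < 2*n by omega) with ⟨h1,h2⟩|⟨h1,h2⟩ <;>
    by_cases hk : (k:ℕ) = 0 <;> simp [hk] <;> omega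

/-- For all `n ≥ 3` and `1 ≤ m ≤ ⌊(n-1)/2⌋`, under the explicit labeling `g` of the
generalised Petersen graph `P(n,m)`, the vertex-weights of the outer-cycle vertices
`u_1, …, u_n` are pairwise distinct. -/
theorem petLabel_outer_weights_distinct (n m : ℕ) (hn : 3 ≤ n) (hm1 : 1 ≤ m)
    (hm2 : m ≤ (n - 1) / 2) :
    Function.Injective (fun k : Fin n => vertexWt (petersen n m) (petLabel n m) (inl k)) := by
  intro a b h
  simp only [wt_outer hn] at h
  have ha := a.2
  have hb := b.2
  apply Fin.ext
  by_cases h1 : (a:ℕ) = 0 <;> by_cases h2 : (b:ℕ) = 0 <;>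
    simp only [h1, h2, if_true, if_false, if_pos, if_neg, reduceIte] at h <;> omega
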